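/- Recursive batch equivalence of the Kalman filter (eq. (completecost)). Let P_{0|−1} ∈ ℝ^{n×n}, Q_i ∈ ℝ^{n×n}, R_i ∈ ℝ^{m×m} be symmetric positive definite, C_i ∈ ℝ^{m×n}, y_i ∈ ℝ^m for i = 0,…,k, and x̂_{0|−1} ∈ ℝ^n. Define recursively, for i = 0,…,k: P_{i|i} = (P_{i|i−1}⁻¹ + C_iᵀR_i⁻¹C_i)⁻¹, x̂_{i|i} = x̂_{i|i−1} + P_{i|i}C_iᵀR_i⁻¹(y_i − C_i x̂_{i|i−1}), P_{i+1|i} = P_{i|i} + Q_i, x̂_{i+1|i} = x̂_{i|i}. Then the function (x_0,…,x_{k+1}) ↦ ‖x_0 − x̂_{0|−1}‖²_{P_{0|−1}⁻¹} + Σ_{i=0}^{k} (‖y_i − C_i x_i‖²_{R_i⁻¹} + ‖x_{i+1} − x_i‖²_{Q_i⁻¹}) has a unique minimizer whose last two components equal x̂_{k|k} and x̂_{k+1|k} respectively. -/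

import Mathlib

open Finset Matrix
open scoped RealInnerProductSpace

/-- Action of a matrix on a Euclidean vector. -/
noncomputable def act {ι κ : Type*} [Fintype ι] [Fintype κ] (A : Matrix ι κ ℝ)
    (v : EuclideanSpace ℝ κ) : EuclideanSpace ℝ ι :=
  WithLp.toLp 2 (A.mulVec v)

/-- Weighted squared norm `‖v‖²_M = vᵀ M v`. -/
noncomputable def qnorm {ι : Type*} [Fintype ι] (M : Matrix ι ι ℝ)
    (v : EuclideanSpace ℝ ι) : ℝ :=
  ⟪v, act M v⟫

/-- The batch full-information cost
`(x_0,…,x_{k+1}) ↦ ‖x_0 − x̂_{0|−1}‖²_{P_{0|−1}⁻¹} + Σᵢ (‖y_i − C_i x_i‖²_{R_i⁻¹} + ‖x_{i+1} − x_i‖²_{Q_i⁻¹})`. -/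
noncomputable def kalmanCost {n m : ℕ} (k : ℕ)
    (C : ℕ → Matrix (Fin m) (Fin n) ℝ) (R : ℕ → Matrix (Fin m) (Fin m) ℝ)
    (Q : ℕ → Matrix (Fin n) (Fin n) ℝ) (y : ℕ → EuclideanSpace ℝ (Fin m))
    (P0 : Matrix (Fin n) (Fin n) ℝ) (xhat0 : EuclideanSpace ℝ (Fin n))
    (X : Fin (k + 2) → EuclideanSpace ℝ (Fin n)) : ℝ :=
  qnorm P0⁻¹ (X 0 - xhat0)
    + ∑ i : Fin (k + 1),
        (qnorm (R i)⁻¹ (y i - act (C i) (X i.castSucc))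
          + qnorm (Q i)⁻¹ (X i.succ - X i.castSucc))

/-!
Forward dynamic programming. For the batch cost restricted to stages `0, …, j`, the minimum
over all trajectories ending at `x` (the arrival cost) is `c + ‖x - x̂_{j|j-1}‖²_{P_{j|j-1}⁻¹}`,
attained by exactly one trajectory. Adding the measurement term and completing the square gives
`c' + ‖x - x̂_{j|j}‖²_{P_{j|j}⁻¹}` (the information form of the update,
`P_{j|j}⁻¹ x̂_{j|j} = P_{j|j-1}⁻¹ x̂_{j|j-1} + Cᵀ R⁻¹ y`). Minimising out `x_j` against
`‖x_{j+1} - x_j‖²_{Q⁻¹}` is an infimal convolution of two quadratics, whose value is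
`c' + ‖x_{j+1} - x̂_{j|j}‖²_{(P_{j|j} + Q)⁻¹}`. At the last stage both remaining quadratic terms
vanish exactly when `x_k = x_{k+1} = x̂_{k|k}`.
-/

theorem Matrix.PosDef.isSymm {ι : Type*} {M : Matrix ι ι ℝ} (hM : M.PosDef) : M.IsSymm :=
  isHermitian_iff_isSymm.1 hM.isHermitian

section QuadraticForms

variable {ι κ μ : Type*} [Fintype ι] [Fintype κ] [Fintype μ]

theorem act_add (A : Matrix κ ι ℝ) (u v : EuclideanSpace ℝ ι) :
    act A (u + v) = act A u + act A v := by
  simp [act, mulVec_add]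

theorem act_sub (A : Matrix κ ι ℝ) (u v : EuclideanSpace ℝ ι) :
    act A (u - v) = act A u - act A v := by
  simp [act, mulVec_sub]

theorem add_act (A B : Matrix κ ι ℝ) (v : EuclideanSpace ℝ ι) :
    act (A + B) v = act A v + act B v := by
  simp [act, add_mulVec]

theorem act_mul (A : Matrix μ κ ℝ) (B : Matrix κ ι ℝ) (v : EuclideanSpace ℝ ι) :
    act (A * B) v = act A (act B v) := by
  simp [act, mulVec_mulVec]

theorem act_one [DecidableEq ι] (v : EuclideanSpace ℝ ι) : act (1 : Matrix ι ι ℝ) v = v := by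
  simp [act]

theorem inner_act_left (A : Matrix κ ι ℝ) (u : EuclideanSpace ℝ ι) (v : EuclideanSpace ℝ κ) :
    ⟪act A u, v⟫ = ⟪u, act Aᵀ v⟫ := by
  simp [act, EuclideanSpace.inner_eq_star_dotProduct, dotProduct_mulVec, vecMul_transpose,
    dotProduct_comm]

theorem Matrix.IsSymm.inner_act_comm {M : Matrix ι ι ℝ} (hM : M.IsSymm)
    (u v : EuclideanSpace ℝ ι) : ⟪u, act M v⟫ = ⟪v, act M u⟫ := by
  rw [real_inner_comm, inner_act_left, hM.eq]

theorem qnorm_zero (M : Matrix ι ι ℝ) : qnorm M 0 = 0 := by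
  simp [qnorm]

theorem qnorm_act (M : Matrix κ κ ℝ) (C : Matrix κ ι ℝ) (v : EuclideanSpace ℝ ι) :
    qnorm M (act C v) = qnorm (Cᵀ * M * C) v := by
  rw [qnorm, inner_act_left, qnorm, act_mul, act_mul]

theorem qnorm_sub {M : Matrix ι ι ℝ} (hM : M.IsSymm) (u v : EuclideanSpace ℝ ι) :
    qnorm M (u - v) = qnorm M u - 2 * ⟪u, act M v⟫ + qnorm M v := by
  simp only [qnorm, act_sub, inner_sub_left, inner_sub_right, hM.inner_act_comm v u]
  ring

theorem qnorm_nonneg {M : Matrix ι ι ℝ} (hM : M.PosSemidef) (v : EuclideanSpace ℝ ι) :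
    0 ≤ qnorm M v := by
  simpa [qnorm, act, EuclideanSpace.inner_eq_star_dotProduct, dotProduct_comm]
    using hM.dotProduct_mulVec_nonneg v.ofLp

theorem qnorm_eq_zero_iff {M : Matrix ι ι ℝ} (hM : M.PosDef) {v : EuclideanSpace ℝ ι} :
    qnorm M v = 0 ↔ v = 0 := by
  refine ⟨fun h => ?_, fun h => h ▸ qnorm_zero M⟩
  by_contra hv
  have := hM.dotProduct_mulVec_pos (x := v.ofLp) (by simpa using hv)
  simp [qnorm, act, EuclideanSpace.inner_eq_star_dotProduct, dotProduct_comm] at h this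
  linarith

theorem qnorm_sub_add_qnorm_sub_act {P H : Matrix ι ι ℝ} {G : Matrix κ κ ℝ} {C : Matrix κ ι ℝ}
    (hP : P.IsSymm) (hG : G.IsSymm) (hH : H = P + Cᵀ * G * C)
    {s t u : EuclideanSpace ℝ ι} {y : EuclideanSpace ℝ κ}
    (ht : act H t = act P s + act (Cᵀ * G) y) :
    qnorm P (u - s) + qnorm G (y - act C u)
      = qnorm H (u - t) + (qnorm P s + qnorm G y - qnorm H t) := by
  have hHsymm : H.IsSymm := by
    rw [hH]; exact hP.add (by simp [IsSymm, Matrix.mul_assoc, hG.eq])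
  have hcross : ⟪y, act G (act C u)⟫ = ⟪u, act (Cᵀ * G) y⟫ := by
    rw [hG.inner_act_comm, inner_act_left, act_mul]
  have hHu : qnorm H u = qnorm P u + qnorm (Cᵀ * G * C) u := by
    rw [qnorm, hH, add_act, inner_add_right, qnorm, qnorm]
  rw [qnorm_sub hP, qnorm_sub hG, qnorm_sub hHsymm, ht, hcross, qnorm_act, hHu, inner_add_right]
  ring

theorem sub_qnorm (A B : Matrix ι ι ℝ) (v : EuclideanSpace ℝ ι) :
    qnorm (A - B) v = qnorm A v - qnorm B v := by
  simp [qnorm, act, sub_mulVec, inner_sub_right]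

theorem qnorm_act_inv [DecidableEq ι] {H : Matrix ι ι ℝ} (hH : H.PosDef) (w : EuclideanSpace ℝ ι) :
    qnorm H (act H⁻¹ w) = qnorm H⁻¹ w := by
  rw [qnorm_act, hH.inv.isSymm.eq, nonsing_inv_mul _ hH.det_pos.ne'.isUnit, one_mul]

theorem qnorm_inv_sub_add_qnorm_inv_sub [DecidableEq ι] {P Q : Matrix ι ι ℝ}
    (hP : P.PosDef) (hQ : Q.PosDef) (a x z : EuclideanSpace ℝ ι) :
    qnorm P⁻¹ (z - a) + qnorm Q⁻¹ (x - z)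
      = qnorm (P⁻¹ + Q⁻¹) (z - act (P⁻¹ + Q⁻¹)⁻¹ (act P⁻¹ a + act Q⁻¹ x))
        + qnorm (P + Q)⁻¹ (x - a) := by
  set H := P⁻¹ + Q⁻¹
  set g := act H⁻¹ (act P⁻¹ a + act Q⁻¹ x)
  have hH : H.PosDef := hP.inv.add hQ.inv
  have hHg : act H g = act P⁻¹ a + act (1ᵀ * Q⁻¹) x := by
    rw [← act_mul, mul_nonsing_inv _ hH.det_pos.ne'.isUnit, act_one, transpose_one, one_mul]
  have hsq := fun u => qnorm_sub_add_qnorm_sub_act (u := u) hP.inv.isSymm hQ.inv.isSymm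
    (by rw [transpose_one, one_mul, mul_one]) hHg
  simp only [act_one] at hsq
  have hxg : x - g = act H⁻¹ (act P⁻¹ (x - a)) := by
    have hx : x = act H⁻¹ (act P⁻¹ x + act Q⁻¹ x) := by
      rw [← add_act, ← act_mul, nonsing_inv_mul _ hH.det_pos.ne'.isUnit, act_one]
    conv_lhs => rw [hx]
    rw [← act_sub, act_sub P⁻¹]
    congr 1
    abel
  have hwood : (P + Q)⁻¹ = P⁻¹ - P⁻¹ * H⁻¹ * P⁻¹ := by
    simpa [H, add_comm] using add_mul_mul_inv_eq_sub P 1 Q 1 hP.isUnit hQ.isUnit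
      (by simpa [add_comm] using hH.isUnit)
  -- at `z = x` the completed square pins down its constant term
  have hrem := hsq x
  rw [sub_self, qnorm_zero, add_zero, hxg, qnorm_act_inv hH, qnorm_act, hP.inv.isSymm.eq] at hrem
  rw [hsq z, hwood, sub_qnorm]
  linarith

theorem Matrix.PosDef.inv_add_transpose_mul_inv_mul [DecidableEq ι] [DecidableEq κ]
    {P : Matrix ι ι ℝ} {R : Matrix κ κ ℝ} (hP : P.PosDef) (hR : R.PosDef) (C : Matrix κ ι ℝ) :
    (P⁻¹ + Cᵀ * R⁻¹ * C).PosDef :=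
  hP.inv.add_posSemidef <| by
    simpa [conjTranspose_eq_transpose_of_trivial] using
      hR.inv.posSemidef.conjTranspose_mul_mul_same C

end QuadraticForms

structure IsArrivalCost {α β : Type*} (G : α → ℝ) (π : α → β) (V : β → ℝ) : Prop where
  le : ∀ a, V (π a) ≤ G a
  existsUnique : ∀ b, ∃! a, π a = b ∧ G a = V b

namespace IsArrivalCost

variable {α β γ : Type*} {G : α → ℝ} {π : α → β} {V : β → ℝ}

theorem of_section (hle : ∀ a, V (π a) ≤ G a) (s : β → α) (hs : ∀ b, π (s b) = b)
    (heq : ∀ a, G a = V (π a) ↔ a = s (π a)) : IsArrivalCost G π V where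
  le := hle
  existsUnique b := by
    refine ⟨s b, ⟨hs b, ?_⟩, fun a ⟨ha, hGa⟩ => ?_⟩
    · have := (heq (s b)).2 (by rw [hs])
      rwa [hs] at this
    · rw [← ha]
      exact (heq a).1 (ha ▸ hGa)

theorem add_comp (hG : IsArrivalCost G π V) (h : β → ℝ) :
    IsArrivalCost (fun a => G a + h (π a)) π (fun b => V b + h b) where
  le a := by simpa using hG.le a
  existsUnique b := by
    obtain ⟨a, ⟨ha, hGa⟩, huniq⟩ := hG.existsUnique b
    refine ⟨a, ⟨ha, by rw [hGa, ha]⟩, fun a' ⟨ha', hGa'⟩ => huniq a' ⟨ha', ?_⟩⟩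
    rw [ha'] at hGa'
    linarith

theorem trans {ρ : β → γ} {U : γ → ℝ} (hG : IsArrivalCost G π V) (hV : IsArrivalCost V ρ U) :
    IsArrivalCost G (ρ ∘ π) U where
  le a := (hV.le (π a)).trans (hG.le a)
  existsUnique c := by
    obtain ⟨b, ⟨hb, hVb⟩, hbuniq⟩ := hV.existsUnique c
    obtain ⟨a, ⟨ha, hGa⟩, hauniq⟩ := hG.existsUnique b
    refine ⟨a, ⟨by simp [ha, hb], by rw [hGa, hVb]⟩, fun a' ⟨ha', hGa'⟩ => ?_⟩
    have hVa' : V (π a') = U c :=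
      le_antisymm (hGa' ▸ hG.le a') (ha' ▸ hV.le (π a'))
    have hπ : π a' = b := hbuniq _ ⟨ha', hVa'⟩
    exact hauniq a' ⟨hπ, by rw [hGa', ← hVb, ← hπ, hVa']⟩

theorem isMinimizer_iff {c : ℝ} (hG : IsArrivalCost G (fun _ => ()) (fun _ => c)) {x : α}
    (hx : G x = c) (z : α) : (∀ w, G z ≤ G w) ↔ z = x := by
  refine ⟨fun hz => ?_, fun hzx w => hzx ▸ hx ▸ hG.le w⟩
  obtain ⟨a, -, huniq⟩ := hG.existsUnique ()
  rw [huniq z ⟨rfl, le_antisymm (hx ▸ hz x) (hG.le z)⟩, huniq x ⟨rfl, hx⟩]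

theorem snoc {E : Type*} {j : ℕ} {F : (Fin (j + 1) → E) → ℝ} {W : E → ℝ}
    (hF : IsArrivalCost F (fun Z => Z (Fin.last j)) W) (D : E → E → ℝ) :
    IsArrivalCost
      (fun Z : Fin (j + 2) → E => F (Fin.init Z) + D (Z (Fin.last j).castSucc) (Z (Fin.last (j + 1))))
      (fun Z => (Z (Fin.last j).castSucc, Z (Fin.last (j + 1)))) (fun p => W p.1 + D p.1 p.2) where
  le Z := add_le_add (hF.le (Fin.init Z)) le_rfl
  existsUnique := by
    rintro ⟨z, x⟩
    obtain ⟨Z, ⟨hZ, hFZ⟩, huniq⟩ := hF.existsUnique z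
    refine ⟨Fin.snoc Z x, ⟨by simp [hZ], by simp [Fin.init_snoc, hFZ, hZ]⟩,
      fun Z' ⟨hZ', hFZ'⟩ => ?_⟩
    obtain ⟨hj, hlast⟩ := Prod.mk.inj hZ'
    have hinit : Fin.init Z' = Z := by
      refine huniq _ ⟨hj, ?_⟩
      rw [hj, hlast] at hFZ'
      linarith
    rw [← Fin.snoc_init_self Z', hinit, hlast]

end IsArrivalCost

section QuadraticArrivalCost

variable {ι κ : Type*} [Fintype ι] [DecidableEq ι] [Fintype κ] [DecidableEq κ] {j : ℕ}

def HasQuadraticArrivalCost (G : (Fin (j + 1) → EuclideanSpace ℝ ι) → ℝ) (P : Matrix ι ι ℝ)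
    (xhat : EuclideanSpace ℝ ι) : Prop :=
  ∃ c, IsArrivalCost G (fun Z => Z (Fin.last j)) (fun x => c + qnorm P⁻¹ (x - xhat))

theorem HasQuadraticArrivalCost.measurementUpdate {G : (Fin (j + 1) → EuclideanSpace ℝ ι) → ℝ}
    {P Pf : Matrix ι ι ℝ} {R : Matrix κ κ ℝ} {C : Matrix κ ι ℝ} {y : EuclideanSpace ℝ κ}
    {xp xf : EuclideanSpace ℝ ι} (hG : HasQuadraticArrivalCost G P xp)
    (hP : P.PosDef) (hR : R.PosDef) (hPf : Pf = (P⁻¹ + Cᵀ * R⁻¹ * C)⁻¹)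
    (hxf : xf = xp + act (Pf * Cᵀ * R⁻¹) (y - act C xp)) :
    HasQuadraticArrivalCost (fun Z => G Z + qnorm R⁻¹ (y - act C (Z (Fin.last j)))) Pf xf := by
  have hinfo := hP.inv_add_transpose_mul_inv_mul hR C
  have hPf_inv : Pf⁻¹ = P⁻¹ + Cᵀ * R⁻¹ * C := by
    rw [hPf, nonsing_inv_nonsing_inv _ hinfo.det_pos.ne'.isUnit]
  have hPf_det : IsUnit Pf.det := by
    rw [hPf]; exact hinfo.inv.det_pos.ne'.isUnit
  have hxf_info : act Pf⁻¹ xf = act P⁻¹ xp + act (Cᵀ * R⁻¹) y := by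
    rw [hxf, act_add, ← act_mul, ← Matrix.mul_assoc, ← Matrix.mul_assoc,
      nonsing_inv_mul _ hPf_det, Matrix.one_mul, act_sub, hPf_inv, add_act, ← act_mul (Cᵀ * R⁻¹)]
    abel
  obtain ⟨c, hc⟩ := hG
  refine ⟨c + (qnorm P⁻¹ xp + qnorm R⁻¹ y - qnorm Pf⁻¹ xf), ?_⟩
  convert hc.add_comp (fun x => qnorm R⁻¹ (y - act C x)) using 2 with x
  rw [add_assoc c (qnorm P⁻¹ (x - xp)),
    qnorm_sub_add_qnorm_sub_act hP.inv.isSymm hR.inv.isSymm hPf_inv hxf_info]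
  ring

theorem HasQuadraticArrivalCost.predictionUpdate {F : (Fin (j + 1) → EuclideanSpace ℝ ι) → ℝ}
    {G : (Fin (j + 2) → EuclideanSpace ℝ ι) → ℝ} {P Q : Matrix ι ι ℝ}
    {xhat : EuclideanSpace ℝ ι} (hF : HasQuadraticArrivalCost F P xhat)
    (hP : P.PosDef) (hQ : Q.PosDef)
    (hG : ∀ Z, G Z = F (Fin.init Z) + qnorm Q⁻¹ (Z (Fin.last (j + 1)) - Z (Fin.last j).castSucc)) :
    HasQuadraticArrivalCost G (P + Q) xhat := by
  obtain rfl : G = _ := funext hG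
  obtain ⟨c, hc⟩ := hF
  refine ⟨c, (hc.snoc fun z x => qnorm Q⁻¹ (x - z)).trans (ρ := Prod.snd) ?_⟩
  set M := P⁻¹ + Q⁻¹
  set g := fun x => act M⁻¹ (act P⁻¹ xhat + act Q⁻¹ x)
  have hsplit : ∀ z x, c + qnorm P⁻¹ (z - xhat) + qnorm Q⁻¹ (x - z)
      = c + qnorm (P + Q)⁻¹ (x - xhat) + qnorm M (z - g x) := fun z x => by
    rw [add_assoc, qnorm_inv_sub_add_qnorm_inv_sub hP hQ]
    ring
  have hM : M.PosDef := hP.inv.add hQ.inv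
  refine .of_section (fun p => ?_) (fun x => (g x, x)) (fun _ => rfl) (fun p => ?_)
  · rw [hsplit]
    exact le_add_of_nonneg_right (qnorm_nonneg hM.posSemidef _)
  · rw [hsplit, add_eq_left, qnorm_eq_zero_iff hM, sub_eq_zero]
    exact ⟨fun h => Prod.ext h rfl, fun h => congrArg Prod.fst h⟩

theorem HasQuadraticArrivalCost.exists_isMinimizer_iff
    {F : (Fin (j + 1) → EuclideanSpace ℝ ι) → ℝ} {G : (Fin (j + 2) → EuclideanSpace ℝ ι) → ℝ}
    {P Q : Matrix ι ι ℝ} {xhat : EuclideanSpace ℝ ι} (hF : HasQuadraticArrivalCost F P xhat)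
    (hP : P.PosDef) (hQ : Q.PosDef)
    (hG : ∀ Z, G Z = F (Fin.init Z) + qnorm Q⁻¹ (Z (Fin.last (j + 1)) - Z (Fin.last j).castSucc)) :
    ∃ X, X (Fin.last j).castSucc = xhat ∧ X (Fin.last (j + 1)) = xhat ∧
      ∀ Z, (∀ W, G Z ≤ G W) ↔ Z = X := by
  obtain rfl : G = _ := funext hG
  obtain ⟨c, hc⟩ := hF
  have hpair : IsArrivalCost
      (fun p : EuclideanSpace ℝ ι × EuclideanSpace ℝ ι =>
        c + qnorm P⁻¹ (p.1 - xhat) + qnorm Q⁻¹ (p.2 - p.1))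
      (fun _ => ()) (fun _ => c) := by
    refine .of_section (fun p => ?_) (fun _ => (xhat, xhat)) (fun _ => rfl) (fun p => ?_)
    · have := qnorm_nonneg hP.inv.posSemidef (p.1 - xhat)
      have := qnorm_nonneg hQ.inv.posSemidef (p.2 - p.1)
      linarith
    · obtain ⟨z, x⟩ := p
      dsimp only
      rw [add_assoc, add_eq_left, add_eq_zero_iff_of_nonneg (qnorm_nonneg hP.inv.posSemidef _)
        (qnorm_nonneg hQ.inv.posSemidef _), qnorm_eq_zero_iff hP.inv, qnorm_eq_zero_iff hQ.inv,
        sub_eq_zero, sub_eq_zero, Prod.mk.injEq]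
      constructor <;> rintro ⟨h1, h2⟩ <;> exact ⟨h1, by rw [h2, h1]⟩
  obtain ⟨Z, ⟨hZ, hFZ⟩, -⟩ := hc.existsUnique xhat
  refine ⟨Fin.snoc Z xhat, by simp [hZ], by simp, fun W => ?_⟩
  refine ((hc.snoc fun z x => qnorm Q⁻¹ (x - z)).trans hpair).isMinimizer_iff ?_ W
  simp [Fin.init_snoc, hFZ, hZ, qnorm_zero]

end QuadraticArrivalCost

noncomputable def kalmanCostUpTo {n m : ℕ}
    (C : ℕ → Matrix (Fin m) (Fin n) ℝ) (R : ℕ → Matrix (Fin m) (Fin m) ℝ)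
    (Q : ℕ → Matrix (Fin n) (Fin n) ℝ) (y : ℕ → EuclideanSpace ℝ (Fin m))
    (P0 : Matrix (Fin n) (Fin n) ℝ) (xhat0 : EuclideanSpace ℝ (Fin n))
    (j : ℕ) (X : Fin (j + 1) → EuclideanSpace ℝ (Fin n)) : ℝ :=
  qnorm P0⁻¹ (X 0 - xhat0)
    + ∑ i : Fin j,
        (qnorm (R i)⁻¹ (y i - act (C i) (X i.castSucc))
          + qnorm (Q i)⁻¹ (X i.succ - X i.castSucc))

section KalmanRecursion

variable {n m : ℕ} (C : ℕ → Matrix (Fin m) (Fin n) ℝ) (R : ℕ → Matrix (Fin m) (Fin m) ℝ)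
  (Q : ℕ → Matrix (Fin n) (Fin n) ℝ) (y : ℕ → EuclideanSpace ℝ (Fin m))
  (P0 : Matrix (Fin n) (Fin n) ℝ) (xhat0 : EuclideanSpace ℝ (Fin n))

theorem kalmanCostUpTo_succ (j : ℕ) (X : Fin (j + 2) → EuclideanSpace ℝ (Fin n)) :
    kalmanCostUpTo C R Q y P0 xhat0 (j + 1) X
      = (kalmanCostUpTo C R Q y P0 xhat0 j (Fin.init X)
          + qnorm (R j)⁻¹ (y j - act (C j) (Fin.init X (Fin.last j))))
        + qnorm (Q j)⁻¹ (X (Fin.last (j + 1)) - X (Fin.last j).castSucc) := by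
  simp only [kalmanCostUpTo, Fin.sum_univ_castSucc, Fin.init, Fin.val_castSucc,
    Fin.succ_castSucc, Fin.val_last, Fin.succ_last, Fin.castSucc_zero]
  ring

theorem hasQuadraticArrivalCost_kalmanCostUpTo_zero :
    HasQuadraticArrivalCost (kalmanCostUpTo C R Q y P0 xhat0 0) P0 xhat0 := by
  have hcost : ∀ X, kalmanCostUpTo C R Q y P0 xhat0 0 X = 0 + qnorm P0⁻¹ (X (Fin.last 0) - xhat0) :=
    fun X => by simp [kalmanCostUpTo]
  refine ⟨0, .of_section (fun X => (hcost X).ge) (fun x _ => x) (fun _ => rfl) fun X => ?_⟩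
  simp only [hcost, true_iff]
  exact funext fun i => congrArg X (Subsingleton.elim (α := Fin 1) i _)

theorem hasQuadraticArrivalCost_kalmanCostUpTo
    (Pp Pf : ℕ → Matrix (Fin n) (Fin n) ℝ) (xp xf : ℕ → EuclideanSpace ℝ (Fin n))
    (hR : ∀ i, (R i).PosDef) (hQ : ∀ i, (Q i).PosDef) (hP0 : (Pp 0).PosDef)
    (hPf : ∀ i, Pf i = ((Pp i)⁻¹ + (C i)ᵀ * (R i)⁻¹ * C i)⁻¹)
    (hxf : ∀ i, xf i = xp i + act (Pf i * (C i)ᵀ * (R i)⁻¹) (y i - act (C i) (xp i)))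
    (hPp : ∀ i, Pp (i + 1) = Pf i + Q i) (hxp : ∀ i, xp (i + 1) = xf i) (j : ℕ) :
    (Pp j).PosDef ∧
      HasQuadraticArrivalCost (kalmanCostUpTo C R Q y (Pp 0) (xp 0) j) (Pp j) (xp j) := by
  induction j with
  | zero => exact ⟨hP0, hasQuadraticArrivalCost_kalmanCostUpTo_zero C R Q y _ _⟩
  | succ j ih =>
    obtain ⟨hPp_j, hcost⟩ := ih
    have hPf_j : (Pf j).PosDef := hPf j ▸ (hPp_j.inv_add_transpose_mul_inv_mul (hR j) (C j)).inv
    rw [hPp, hxp]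
    exact ⟨hPf_j.add (hQ j),
      (hcost.measurementUpdate hPp_j (hR j) (hPf j) (hxf j)).predictionUpdate hPf_j (hQ j)
        (kalmanCostUpTo_succ C R Q y _ _ j)⟩

end KalmanRecursion

/-- Recursive batch equivalence of the Kalman filter: the batch cost has a unique minimizer
whose last two components are the filtered estimate `x̂_{k|k}` and the one-step-ahead
prediction `x̂_{k+1|k}` produced by the Kalman recursion. -/
theorem kalman_batch_equivalence {n m : ℕ} (k : ℕ)
    (C : ℕ → Matrix (Fin m) (Fin n) ℝ) (R : ℕ → Matrix (Fin m) (Fin m) ℝ)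
    (Q : ℕ → Matrix (Fin n) (Fin n) ℝ) (y : ℕ → EuclideanSpace ℝ (Fin m))
    (hR : ∀ i, (R i).PosDef) (hQ : ∀ i, (Q i).PosDef)
    -- predicted/filtered covariances and estimates (`Pp 0 = P_{0|−1}`, `xp 0 = x̂_{0|−1}`)
    (Pp Pf : ℕ → Matrix (Fin n) (Fin n) ℝ)
    (xp xf : ℕ → EuclideanSpace ℝ (Fin n))
    (hP0 : (Pp 0).PosDef)
    (hPf : ∀ i, Pf i = ((Pp i)⁻¹ + (C i)ᵀ * (R i)⁻¹ * C i)⁻¹)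
    (hxf : ∀ i, xf i = xp i + act (Pf i * (C i)ᵀ * (R i)⁻¹) (y i - act (C i) (xp i)))
    (hPp : ∀ i, Pp (i + 1) = Pf i + Q i)
    (hxp : ∀ i, xp (i + 1) = xf i) :
    ∃ X : Fin (k + 2) → EuclideanSpace ℝ (Fin n),
      (∀ Z, kalmanCost k C R Q y (Pp 0) (xp 0) X ≤ kalmanCost k C R Q y (Pp 0) (xp 0) Z) ∧
      (∀ Z, (∀ W, kalmanCost k C R Q y (Pp 0) (xp 0) Z ≤ kalmanCost k C R Q y (Pp 0) (xp 0) W)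
        → Z = X) ∧
      X (Fin.castSucc (Fin.last k)) = xf k ∧
      X (Fin.last (k + 1)) = xp (k + 1) := by
  obtain ⟨hPp_k, hcost⟩ :=
    hasQuadraticArrivalCost_kalmanCostUpTo C R Q y Pp Pf xp xf hR hQ hP0 hPf hxf hPp hxp k
  have hPf_k : (Pf k).PosDef := hPf k ▸ (hPp_k.inv_add_transpose_mul_inv_mul (hR k) (C k)).inv
  -- `kalmanCost k` unfolds to `kalmanCostUpTo … (k + 1)`
  obtain ⟨X, hX_k, hX_last, hmin⟩ :=
    (hcost.measurementUpdate hPp_k (hR k) (hPf k) (hxf k)).exists_isMinimizer_iff hPf_k (hQ k)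
      (kalmanCostUpTo_succ C R Q y (Pp 0) (xp 0) k)
  exact ⟨X, (hmin X).2 rfl, fun Z hZ => (hmin Z).1 hZ, hX_k, hxp k ▸ hX_last⟩
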